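/- arXiv:2407.19333 — 2 statements merged into one kernel-verified Lean document; each statement's English description precedes it below -/
import Mathlib

section
/- The limit as α → 0⁺ of sinh(α)² / (φ(α)² − 1) equals 2, where φ(α) = ∫₀¹ cosh(α cos(2πs)) ds. -/
/-!
Inside the integral, `x²/2 ≤ cosh x - 1 ≤ (x²/2) e^{x²/2}`; since `∫₀¹ cos²(2πs) ds = 1/2`
this gives `α²/4 ≤ φ(α) - 1 ≤ (α²/4) e^{α²/2}`. Hence `φ(α)² - 1 = (φ(α) - 1)(φ(α) + 1) ~ α²/2`,
while `sinh² α ~ α²`.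
-/

open Real MeasureTheory Filter Set Topology

noncomputable def phi (α : ℝ) : ℝ := ∫ s in (0:ℝ)..1, Real.cosh (α * Real.cos (2 * Real.pi * s))

lemma cosh_sub_one_eq_two_mul_sinh_sq (x : ℝ) : cosh x - 1 = 2 * sinh (x / 2) ^ 2 := by
  rw [← cosh_sq_sub_sinh_sq (x / 2)]
  nth_rw 1 [← mul_div_cancel₀ x two_ne_zero, cosh_two_mul]
  ring

lemma sq_div_two_le_cosh_sub_one (x : ℝ) : x ^ 2 / 2 ≤ cosh x - 1 := by
  have h : |x / 2| ≤ |sinh (x / 2)| := by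
    rw [abs_sinh]
    exact self_le_sinh_iff.2 (abs_nonneg _)
  rw [cosh_sub_one_eq_two_mul_sinh_sq]
  nlinarith [sq_le_sq.2 h]

lemma exp_sub_one_le_mul_exp (y : ℝ) : exp y - 1 ≤ y * exp y := by
  have h := mul_le_mul_of_nonneg_right (one_sub_le_exp_neg y) (exp_pos y).le
  rw [← exp_add, neg_add_cancel, exp_zero] at h
  linarith

lemma cosh_sub_one_le (x : ℝ) : cosh x - 1 ≤ x ^ 2 / 2 * exp (x ^ 2 / 2) := by
  linarith [cosh_le_exp_half_sq x, exp_sub_one_le_mul_exp (x ^ 2 / 2)]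

lemma integral_cos_two_pi_mul_sq : ∫ s in (0:ℝ)..1, cos (2 * π * s) ^ 2 = 1 / 2 := by
  rw [intervalIntegral.integral_comp_mul_left (fun x => cos x ^ 2) (by positivity : 2 * π ≠ 0),
    integral_cos_sq]
  simp only [mul_one, mul_zero, sin_two_pi, sin_zero, sub_zero, zero_add, smul_eq_mul]
  field_simp

lemma integral_one_add_mul_cos_two_pi_mul_sq (k : ℝ) :
    ∫ s in (0:ℝ)..1, (1 + k * cos (2 * π * s) ^ 2) = 1 + k / 2 := by
  rw [intervalIntegral.integral_add intervalIntegrable_const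
    (Continuous.intervalIntegrable (by fun_prop) _ _),
    intervalIntegral.integral_const_mul, integral_cos_two_pi_mul_sq]
  simp only [intervalIntegral.integral_const, sub_zero, smul_eq_mul, mul_one]
  ring

lemma continuous_phi : Continuous phi :=
  intervalIntegral.continuous_parametric_intervalIntegral_of_continuous' (by fun_prop) 0 1

lemma phi_zero : phi 0 = 1 := by simp [phi]

lemma one_add_sq_div_four_le_phi (α : ℝ) : 1 + α ^ 2 / 4 ≤ phi α := by
  calc 1 + α ^ 2 / 4 = ∫ s in (0:ℝ)..1, (1 + α ^ 2 / 2 * cos (2 * π * s) ^ 2) := by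
        rw [integral_one_add_mul_cos_two_pi_mul_sq]; ring
    _ ≤ phi α := by
      refine intervalIntegral.integral_mono_on zero_le_one
        (Continuous.intervalIntegrable (by fun_prop) _ _)
        (Continuous.intervalIntegrable (by fun_prop) _ _) fun s _ => ?_
      linarith [sq_div_two_le_cosh_sub_one (α * cos (2 * π * s)), mul_pow α (cos (2 * π * s)) 2]

lemma phi_le (α : ℝ) : phi α ≤ 1 + α ^ 2 / 4 * exp (α ^ 2 / 2) := by
  calc phi α ≤ ∫ s in (0:ℝ)..1, (1 + α ^ 2 / 2 * exp (α ^ 2 / 2) * cos (2 * π * s) ^ 2) := by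
        refine intervalIntegral.integral_mono_on zero_le_one
          (Continuous.intervalIntegrable (by fun_prop) _ _)
          (Continuous.intervalIntegrable (by fun_prop) _ _) fun s _ => ?_
        set c := cos (2 * π * s)
        have hc : c ^ 2 ≤ 1 := cos_sq_le_one _
        have hexp : exp ((α * c) ^ 2 / 2) ≤ exp (α ^ 2 / 2) := by
          rw [exp_le_exp, mul_pow]
          nlinarith [sq_nonneg α]
        have hcoef : 0 ≤ α ^ 2 / 2 * c ^ 2 := by positivity
        calc cosh (α * c) ≤ 1 + α ^ 2 / 2 * c ^ 2 * exp ((α * c) ^ 2 / 2) := by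
              linarith [cosh_sub_one_le (α * c), mul_pow α c 2]
          _ ≤ 1 + α ^ 2 / 2 * exp (α ^ 2 / 2) * c ^ 2 := by
              linarith [mul_le_mul_of_nonneg_left hexp hcoef]
    _ = 1 + α ^ 2 / 4 * exp (α ^ 2 / 2) := by rw [integral_one_add_mul_cos_two_pi_mul_sq]; ring

lemma tendsto_phi_sub_one_div_sq :
    Tendsto (fun α => (phi α - 1) / α ^ 2) (𝓝[≠] 0) (𝓝 (1 / 4)) := by
  have hupper : Tendsto (fun α : ℝ => exp (α ^ 2 / 2) / 4) (𝓝[≠] 0) (𝓝 (1 / 4)) :=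
    ((by fun_prop : Continuous fun α : ℝ => exp (α ^ 2 / 2) / 4).tendsto' 0 _ (by simp)).mono_left
      nhdsWithin_le_nhds
  refine tendsto_of_tendsto_of_tendsto_of_le_of_le' tendsto_const_nhds hupper ?_ ?_ <;>
    filter_upwards [self_mem_nhdsWithin] with α (hα : α ≠ 0)
  · rw [le_div_iff₀ (by positivity)]
    linarith [one_add_sq_div_four_le_phi α]
  · rw [div_le_iff₀ (by positivity)]
    linarith [phi_le α]

lemma tendsto_sinh_div_self : Tendsto (fun x => sinh x / x) (𝓝[≠] 0) (𝓝 1) := by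
  simpa [div_eq_inv_mul] using (hasDerivAt_sinh 0).tendsto_slope_zero

theorem psi2_limit :
    Filter.Tendsto (fun α => Real.sinh α ^ 2 / (phi α ^ 2 - 1))
      (nhdsWithin 0 (Set.Ioi 0)) (nhds 2) := by
  have hphi : Tendsto (fun α => phi α + 1) (𝓝[≠] 0) (𝓝 2) := by
    simpa [one_add_one_eq_two] using
      ((continuous_phi.tendsto' 0 1 phi_zero).add_const 1).mono_left nhdsWithin_le_nhds
  have hlim : Tendsto (fun α => (sinh α / α) ^ 2 / ((phi α - 1) / α ^ 2 * (phi α + 1)))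
      (𝓝[≠] 0) (𝓝 2) := by
    convert (tendsto_sinh_div_self.pow 2).div (tendsto_phi_sub_one_div_sq.mul hphi) (by norm_num)
      using 2 <;> norm_num
  refine (hlim.mono_left (nhdsGT_le_nhdsNE 0)).congr' ?_
  filter_upwards [self_mem_nhdsWithin] with α (hα : 0 < α)
  field_simp
  ring
end

section
/- The function ψ(α) = (√(2cosh(α)² − 2φ(α)) + sinh(α)) / √(φ(α)² − 1), defined for α > 0, extends to a continuous function on [0,∞); in particular ψ is bounded on any interval [0, A]. -/
open Real MeasureTheory Filter Set Topology

noncomputable def psi (α : ℝ) : ℝ :=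
  (Real.sqrt (2 * Real.cosh α ^ 2 - 2 * phi α) + Real.sinh α) / Real.sqrt (phi α ^ 2 - 1)

/-!
Both radicands in `psi α` carry a factor `α²`: `sinh α = α S(α)` and `phi α = 1 + α² U(α)`, where
`S = dslope sinh 0` and `U(α) = ∫₀¹ cos²(2πs) h(α cos 2πs) ds` with `h(x) = (cosh x - 1) / x²` are
continuous on all of `ℝ`. Cancelling `α` leaves `(√(2S² - 2U) + S) / √(U (phi + 1))`, whose
denominator never vanishes because `h ≥ 1/2` and `∫₀¹ cos²(2πs) ds = 1/2` give `U ≥ 1/4`.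
-/

theorem Differentiable.continuous_dslope {𝕜 E : Type*} [NontriviallyNormedField 𝕜]
    [NormedAddCommGroup E] [NormedSpace 𝕜 E] {f : 𝕜 → E} (hf : Differentiable 𝕜 f) (a : 𝕜) :
    Continuous (dslope f a) :=
  continuousOn_univ.mp <| (continuousOn_dslope univ_mem).mpr ⟨hf.continuous.continuousOn, hf a⟩

lemma sinh_eq_mul_dslope (x : ℝ) : sinh x = x * dslope sinh 0 x := by
  simpa using (sub_smul_dslope sinh 0 x).symm

lemma one_le_dslope_sinh (x : ℝ) : 1 ≤ dslope sinh 0 x := by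
  rcases lt_trichotomy x 0 with hx | rfl | hx
  · rw [dslope_of_ne _ hx.ne, slope_def_field, sub_zero, sinh_zero, sub_zero, one_le_div_of_neg hx]
    exact (sinh_lt_self_iff.mpr hx).le
  · simp [dslope_same]
  · rw [dslope_of_ne _ hx.ne', slope_def_field, sub_zero, sinh_zero, sub_zero, one_le_div hx]
    exact (self_lt_sinh_iff.mpr hx).le

/-- `(cosh x - 1) / x²`, extended by `1 / 2` at `0`; from `cosh x - 1 = 2 sinh² (x / 2)`. -/
noncomputable def coshSubOneDivSq (x : ℝ) : ℝ := dslope sinh 0 (x / 2) ^ 2 / 2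

lemma continuous_coshSubOneDivSq : Continuous coshSubOneDivSq :=
  (((differentiable_sinh.continuous_dslope 0).comp (continuous_id.div_const 2)).pow 2).div_const 2

lemma cosh_eq_one_add_sq_mul (x : ℝ) : cosh x = 1 + x ^ 2 * coshSubOneDivSq x := by
  have h := cosh_two_mul (x / 2)
  rw [mul_div_cancel₀ x two_ne_zero, cosh_sq', sinh_eq_mul_dslope] at h
  rw [h, coshSubOneDivSq]
  ring

lemma half_le_coshSubOneDivSq (x : ℝ) : 1 / 2 ≤ coshSubOneDivSq x := by
  have := one_le_dslope_sinh (x / 2)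
  unfold coshSubOneDivSq
  nlinarith

/-- `(phi α - 1) / α²`, extended continuously to `α = 0`. -/
noncomputable def phiSubOneDivSq (α : ℝ) : ℝ :=
  ∫ s in (0:ℝ)..1, cos (2 * π * s) ^ 2 * coshSubOneDivSq (α * cos (2 * π * s))

lemma continuous_phiSubOneDivSq : Continuous phiSubOneDivSq :=
  intervalIntegral.continuous_parametric_intervalIntegral_of_continuous' (by
    have := continuous_coshSubOneDivSq
    fun_prop) 0 1

lemma phi_eq_one_add_sq_mul (α : ℝ) : phi α = 1 + α ^ 2 * phiSubOneDivSq α := by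
  have hint : IntervalIntegrable
      (fun s => α ^ 2 * (cos (2 * π * s) ^ 2 * coshSubOneDivSq (α * cos (2 * π * s))))
      volume 0 1 := by
    have := continuous_coshSubOneDivSq
    exact Continuous.intervalIntegrable (by fun_prop) 0 1
  have hpt (s : ℝ) : cosh (α * cos (2 * π * s)) =
      1 + α ^ 2 * (cos (2 * π * s) ^ 2 * coshSubOneDivSq (α * cos (2 * π * s))) := by
    rw [cosh_eq_one_add_sq_mul]; ring
  rw [phi, funext hpt, intervalIntegral.integral_add intervalIntegrable_const hint,
    intervalIntegral.integral_const_mul, phiSubOneDivSq]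
  simp

lemma quarter_le_phiSubOneDivSq (α : ℝ) : 1 / 4 ≤ phiSubOneDivSq α := by
  have hcos : Continuous fun s : ℝ => cos (2 * π * s) ^ 2 := by fun_prop
  have := continuous_coshSubOneDivSq
  calc 1 / 4 = ∫ s in (0:ℝ)..1, cos (2 * π * s) ^ 2 * (1 / 2) := by
        rw [intervalIntegral.integral_mul_const, integral_cos_two_pi_mul_sq]; norm_num
    _ ≤ phiSubOneDivSq α := by
        refine intervalIntegral.integral_mono_on zero_le_one
          ((hcos.mul continuous_const).intervalIntegrable 0 1)
          (Continuous.intervalIntegrable (by fun_prop) 0 1) fun s _ => ?_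
        exact mul_le_mul_of_nonneg_left (half_le_coshSubOneDivSq _) (sq_nonneg _)

/-- The continuous extension of `psi`: numerator and denominator of `psi α` divided by `α`. -/
noncomputable def psiExt (α : ℝ) : ℝ :=
  (√(2 * dslope sinh 0 α ^ 2 - 2 * phiSubOneDivSq α) + dslope sinh 0 α) /
    √(phiSubOneDivSq α * (phi α + 1))

lemma psiExt_eq_psi {α : ℝ} (hα : 0 < α) : psiExt α = psi α := by
  have hnum : 2 * cosh α ^ 2 - 2 * phi α =
      α ^ 2 * (2 * dslope sinh 0 α ^ 2 - 2 * phiSubOneDivSq α) := by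
    rw [cosh_sq', phi_eq_one_add_sq_mul, sinh_eq_mul_dslope]; ring
  have hden : phi α ^ 2 - 1 = α ^ 2 * (phiSubOneDivSq α * (phi α + 1)) := by
    rw [phi_eq_one_add_sq_mul]; ring
  rw [psi, hnum, hden, sqrt_mul (sq_nonneg α), sqrt_mul (sq_nonneg α), sqrt_sq hα.le,
    sinh_eq_mul_dslope, ← mul_add, mul_div_mul_left _ _ hα.ne', psiExt]

lemma continuous_psiExt : Continuous psiExt := by
  have hden (α : ℝ) : 0 < phiSubOneDivSq α * (phi α + 1) := by
    have := quarter_le_phiSubOneDivSq α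
    have : 0 ≤ α ^ 2 * phiSubOneDivSq α := by positivity
    rw [phi_eq_one_add_sq_mul]
    positivity
  have := differentiable_sinh.continuous_dslope 0
  have := continuous_phiSubOneDivSq
  have := continuous_phi
  exact Continuous.div (by fun_prop) (by fun_prop) fun α => (sqrt_pos.mpr (hden α)).ne'

theorem psi_extends_continuously :
    ∃ ψ : ℝ → ℝ, ContinuousOn ψ (Set.Ici (0:ℝ)) ∧
      (∀ α : ℝ, 0 < α → ψ α = psi α) ∧
      (∀ A : ℝ, 0 < A → ∃ M : ℝ, ∀ α ∈ Set.Icc (0:ℝ) A, ψ α ≤ M) := by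
  refine ⟨psiExt, continuous_psiExt.continuousOn, fun α => psiExt_eq_psi, fun A _ => ?_⟩
  obtain ⟨M, hM⟩ := (isCompact_Icc (a := 0) (b := A)).bddAbove_image continuous_psiExt.continuousOn
  exact ⟨M, fun α hα => hM (mem_image_of_mem psiExt hα)⟩
end
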